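/- arXiv:1909.03145 — 4 statements merged into one kernel-verified Lean document; each statement's English description precedes it below -/
import Mathlib

section
/- Let V be a real Hilbert space, 0 ≤ μ ≤ L with L > 0, let f ∈ S^{1,1}_{μ,L}, let g : V → ℝ be convex, F = f + g, and let x* be a global minimizer of F. Let γ_0 > 0 and consider OAG Method-II: for each k ≥ 0, α_k ∈ (0,1) satisfies L·α_k² = (1 − α_k)γ_k + μα_k; γ_{k+1} = (1 − α_k)γ_k + μα_k; y_k = (α_k γ_k v_k + γ_{k+1} x_k)/(γ_k + μα_k); G_k ∈ V satisfies g(z) ≥ g(y_k − G_k/L) + ⟨G_k − ∇f(y_k), z − (y_k − G_k/L)⟩ for all z ∈ V; x_{k+1} = y_k − (1/L)G_k; and v_{k+1} = ((1 − α_k)γ_k v_k + α_k(μ y_k − G_k))/γ_{k+1}. Then for every k ≥ 0, 𝓛_{k+1} ≤ (1 − α_k)·𝓛_k, where 𝓛_k = F(x_k) − F(x*) + (γ_k/2)‖v_k − x*‖². -/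
/-!
For every `z`, the composite gradient step gives
`F(x⁺) ≤ F(z) + ⟪G, y - z⟫ - ‖G‖²/(2L) - μ/2 ‖z - y‖²`
(descent lemma for `f`, strong convexity of `f` at `y`, subgradient inequality for `g` at `x⁺`).
Averaging this at `z = x` and `z = x*` with weights `1 - α`, `α` bounds the function-value part.
For the distance part, `γ' (v' - x*)` is the nonnegative combination
`(1 - α) γ (v - x*) + μ α (y - x*)` shifted by `-α G`; convexity of `‖·‖²` bounds the first piece,
the choice of `y` makes `α` times it equal `γ' ((1 - α)(y - x) + α (y - x*))`, so the cross term
cancels the inner products above, and `L α² = γ'` turns `α² ‖G‖² / γ'` into `‖G‖² / L`.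
-/

open RealInnerProductSpace

section

variable {V : Type*} [NormedAddCommGroup V] [InnerProductSpace ℝ V]

theorem quadratic_upper_bound_of_lipschitz_gradient [CompleteSpace V] {L : ℝ} {f : V → ℝ}
    {f' : V → V} (hf : ∀ z, HasGradientAt f (f' z) z)
    (hlip : ∀ z w, ‖f' z - f' w‖ ≤ L * ‖z - w‖) (z w : V) :
    f z ≤ f w + ⟪f' w, z - w⟫ + L / 2 * ‖z - w‖ ^ 2 := by
  set d := z - w
  set φ : ℝ → ℝ := fun t => f (w + t • d) - t * ⟪f' w, d⟫ - L / 2 * t ^ 2 * ‖d‖ ^ 2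
  have hφ' : ∀ t, HasDerivAt φ (⟪f' (w + t • d) - f' w, d⟫ - L * t * ‖d‖ ^ 2) t := by
    intro t
    have hline : HasDerivAt (fun t : ℝ => w + t • d) d t := by
      simpa using ((hasDerivAt_id t).smul_const d).const_add w
    have hfline := (hf (w + t • d)).hasFDerivAt.comp_hasDerivAt t hline
    refine ((hfline.sub ((hasDerivAt_id t).mul_const ⟪f' w, d⟫)).sub
      (((hasDerivAt_pow 2 t).const_mul (L / 2)).mul_const (‖d‖ ^ 2))).congr_deriv ?_
    rw [InnerProductSpace.toDual_apply_apply, inner_sub_left]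
    ring
  obtain ⟨c, ⟨hc0, -⟩, hc⟩ := exists_hasDerivAt_eq_slope φ _ zero_lt_one
    (fun t _ => (hφ' t).continuousAt.continuousWithinAt) (fun t _ => hφ' t)
  have hslope : ⟪f' (w + c • d) - f' w, d⟫ - L * c * ‖d‖ ^ 2 ≤ 0 := by
    have hgrad : ‖f' (w + c • d) - f' w‖ ≤ L * (c * ‖d‖) := by
      simpa [norm_smul, abs_of_pos hc0] using hlip (w + c • d) w
    nlinarith [real_inner_le_norm (f' (w + c • d) - f' w) d, norm_nonneg d]
  have h10 : φ 1 ≤ φ 0 := by rw [hc] at hslope; linarith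
  simp only [φ, d, one_smul, add_sub_cancel, zero_smul, add_zero] at h10
  linarith

theorem add_le_of_composite_gradient_step {μ L : ℝ} (hL : 0 < L) {f g : V → ℝ} {f' : V → V}
    {y G xn z : V} (hxn : xn = y - (1 / L) • G)
    (hupper : f xn ≤ f y + ⟪f' y, xn - y⟫ + L / 2 * ‖xn - y‖ ^ 2)
    (hlower : f z - f y - ⟪f' y, z - y⟫ ≥ μ / 2 * ‖z - y‖ ^ 2)
    (hsub : g z ≥ g xn + ⟪G - f' y, z - xn⟫) :
    f xn + g xn ≤ f z + g z + ⟪G, y - z⟫ - 1 / (2 * L) * ‖G‖ ^ 2 - μ / 2 * ‖z - y‖ ^ 2 := by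
  have hstep : xn - y = -((1 / L) • G) := by rw [hxn]; abel
  have hinner : ⟪f' y, xn - y⟫ = -(1 / L) * ⟪f' y, G⟫ := by
    rw [hstep, inner_neg_right, real_inner_smul_right]; ring
  have hnorm : L / 2 * ‖xn - y‖ ^ 2 = 1 / (2 * L) * ‖G‖ ^ 2 := by
    rw [hstep, norm_neg, norm_smul, Real.norm_of_nonneg (by positivity)]
    field_simp
  have hsub' : ⟪G - f' y, z - xn⟫ = ⟪G - f' y, z - y⟫ + 1 / L * (‖G‖ ^ 2 - ⟪f' y, G⟫) := by
    rw [show z - xn = (z - y) - (xn - y) by abel, hstep, sub_neg_eq_add, inner_add_right,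
      real_inner_smul_right, inner_sub_left G (f' y) G, real_inner_self_eq_norm_sq]
  have hGz : ⟪G - f' y, z - y⟫ = -⟪G, y - z⟫ - ⟪f' y, z - y⟫ := by
    rw [inner_sub_left, ← neg_sub z y, inner_neg_right]; ring
  have h2L : 1 / L * ‖G‖ ^ 2 = 2 * (1 / (2 * L) * ‖G‖ ^ 2) := by field_simp
  linarith

theorem norm_smul_add_smul_sq_le {a b : ℝ} (ha : 0 ≤ a) (hb : 0 ≤ b) (u w : V) :
    ‖a • u + b • w‖ ^ 2 ≤ (a + b) * (a * ‖u‖ ^ 2 + b * ‖w‖ ^ 2) := by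
  have hgap : (a + b) * (a * ‖u‖ ^ 2 + b * ‖w‖ ^ 2) - ‖a • u + b • w‖ ^ 2 =
      a * b * ‖u - w‖ ^ 2 := by
    rw [norm_add_sq_real, norm_sub_sq_real, norm_smul, norm_smul, real_inner_smul_left,
      real_inner_smul_right, Real.norm_of_nonneg ha, Real.norm_of_nonneg hb]
    ring
  nlinarith [mul_nonneg (mul_nonneg ha hb) (sq_nonneg ‖u - w‖)]

theorem estimate_sequence_dist_le {a γ γ' μ L : ℝ} (hL : 0 < L) (ha : 0 < a) (ha1 : a ≤ 1)
    (hγ : 0 ≤ γ) (hμ : 0 ≤ μ) (hγ' : γ' = (1 - a) * γ + μ * a) (hLa : L * a ^ 2 = γ')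
    {x y v v' G xstar : V} (hy : (γ + μ * a) • y = (a * γ) • v + γ' • x)
    (hv : γ' • v' = ((1 - a) * γ) • v + a • (μ • y - G)) :
    γ' / 2 * ‖v' - xstar‖ ^ 2 ≤ (1 - a) * (γ / 2 * ‖v - xstar‖ ^ 2) +
      a * (μ / 2 * ‖y - xstar‖ ^ 2) - ((1 - a) * ⟪G, y - x⟫ + a * ⟪G, y - xstar⟫) +
      1 / (2 * L) * ‖G‖ ^ 2 := by
  set P := ((1 - a) * γ) • (v - xstar) + (μ * a) • (y - xstar)
  have hγ'pos : 0 < γ' := hLa ▸ by positivity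
  have hv' : γ' • (v' - xstar) = P - a • G := by
    rw [smul_sub, hv, hγ']; module
  have hP : ‖P‖ ^ 2 ≤ γ' * ((1 - a) * γ * ‖v - xstar‖ ^ 2 + μ * a * ‖y - xstar‖ ^ 2) :=
    hγ' ▸ norm_smul_add_smul_sq_le (by nlinarith) (by positivity) _ _
  have haP : a • P = γ' • ((1 - a) • (y - x) + a • (y - xstar)) := by
    subst hγ'
    linear_combination (norm := module) (a - 1) • hy
  have hPG : a * ⟪P, G⟫ = γ' * ((1 - a) * ⟪G, y - x⟫ + a * ⟪G, y - xstar⟫) := by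
    rw [← real_inner_smul_left, haP, real_inner_smul_left, real_inner_comm, inner_add_right,
      real_inner_smul_right, real_inner_smul_right]
  have hexpand : γ' ^ 2 * ‖v' - xstar‖ ^ 2 = ‖P‖ ^ 2 - 2 * (a * ⟪P, G⟫) + a ^ 2 * ‖G‖ ^ 2 := by
    rw [← mul_pow, ← abs_of_pos hγ'pos, ← Real.norm_eq_abs, ← norm_smul, hv', norm_sub_sq_real,
      norm_smul, real_inner_smul_right, Real.norm_of_nonneg ha.le]
    ring
  have hGsq : a ^ 2 * ‖G‖ ^ 2 = γ' * (1 / L * ‖G‖ ^ 2) := by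
    rw [← hLa]; field_simp
  rw [hPG, hGsq] at hexpand
  have hscaled : γ' * ‖v' - xstar‖ ^ 2 ≤ (1 - a) * γ * ‖v - xstar‖ ^ 2 +
      μ * a * ‖y - xstar‖ ^ 2 - 2 * ((1 - a) * ⟪G, y - x⟫ + a * ⟪G, y - xstar⟫) +
      1 / L * ‖G‖ ^ 2 := by
    refine le_of_mul_le_mul_left ?_ hγ'pos
    linear_combination hexpand + hP
  have h2L : 1 / L * ‖G‖ ^ 2 = 2 * (1 / (2 * L) * ‖G‖ ^ 2) := by field_simp
  linarith

end

theorem stmt15_general {V : Type*} [NormedAddCommGroup V] [InnerProductSpace ℝ V] [CompleteSpace V]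
    (μ L : ℝ) (hμ : 0 ≤ μ) (hL : 0 < L) (f : V → ℝ) (f' : V → V)
    (hdiff : ∀ z, HasGradientAt f (f' z) z)
    (hconv : ∀ z w : V, f z - f w - ⟪f' w, z - w⟫ ≥ μ / 2 * ‖z - w‖ ^ 2)
    (hlip : ∀ z w : V, ‖f' z - f' w‖ ≤ L * ‖z - w‖)
    (g : V → ℝ) (xstar : V)
    (γ α : ℕ → ℝ) (hγ0 : 0 < γ 0) (hα : ∀ k, 0 < α k ∧ α k < 1)
    (hstep : ∀ k, L * (α k) ^ 2 = (1 - α k) * γ k + μ * α k)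
    (x y v G : ℕ → V)
    (hγrec : ∀ k, γ (k + 1) = (1 - α k) * γ k + μ * α k)
    (hyrec : ∀ k, (γ k + μ * α k) • y k = (α k * γ k) • v k + γ (k + 1) • x k)
    (hG : ∀ k, ∀ z : V, g z ≥ g (y k - (1 / L) • G k) +
      ⟪G k - f' (y k), z - (y k - (1 / L) • G k)⟫)
    (hxrec : ∀ k, x (k + 1) = y k - (1 / L) • G k)
    (hvrec : ∀ k, γ (k + 1) • v (k + 1) =
      ((1 - α k) * γ k) • v k + α k • (μ • y k - G k)) :
    ∀ k : ℕ,
      (f (x (k + 1)) + g (x (k + 1))) - (f xstar + g xstar) +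
          γ (k + 1) / 2 * ‖v (k + 1) - xstar‖ ^ 2 ≤
        (1 - α k) * ((f (x k) + g (x k)) - (f xstar + g xstar) +
          γ k / 2 * ‖v k - xstar‖ ^ 2) := by
  intro k
  obtain ⟨hα0, hα1⟩ := hα k
  have hLα : ∀ j, L * α j ^ 2 = γ (j + 1) := fun j => (hstep j).trans (hγrec j).symm
  have hγk : 0 ≤ γ k := by
    cases k with
    | zero => exact hγ0.le
    | succ j => exact hLα j ▸ by positivity
  have hval : ∀ z, f (x (k + 1)) + g (x (k + 1)) ≤ f z + g z + ⟪G k, y k - z⟫ -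
      1 / (2 * L) * ‖G k‖ ^ 2 - μ / 2 * ‖z - y k‖ ^ 2 := fun z =>
    add_le_of_composite_gradient_step hL (hxrec k)
      (quadratic_upper_bound_of_lipschitz_gradient hdiff hlip _ _) (hconv z (y k))
      (hxrec k ▸ hG k z)
  have hdist := estimate_sequence_dist_le hL hα0 hα1.le hγk hμ (hγrec k) (hLα k)
    (hyrec k) (hvrec k) (xstar := xstar)
  have hval_x := mul_le_mul_of_nonneg_left (hval (x k)) (sub_nonneg.mpr hα1.le)
  have hval_xstar := mul_le_mul_of_nonneg_left (hval xstar) hα0.le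
  rw [norm_sub_rev xstar] at hval_xstar
  linarith [mul_nonneg (sub_nonneg.mpr hα1.le) (mul_nonneg hμ (sq_nonneg ‖x k - y k‖))]

theorem stmt15 {V : Type*} [NormedAddCommGroup V] [InnerProductSpace ℝ V] [CompleteSpace V]
    (μ L : ℝ) (hμ : 0 ≤ μ) (hμL : μ ≤ L) (hL : 0 < L) (f : V → ℝ) (f' : V → V)
    (hdiff : ∀ z, HasGradientAt f (f' z) z)
    (hconv : ∀ z w : V, f z - f w - ⟪f' w, z - w⟫ ≥ μ / 2 * ‖z - w‖ ^ 2)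
    (hlip : ∀ z w : V, ‖f' z - f' w‖ ≤ L * ‖z - w‖)
    (g : V → ℝ) (hg : ConvexOn ℝ Set.univ g)
    (xstar : V) (hmin : ∀ z, f xstar + g xstar ≤ f z + g z)
    (γ α : ℕ → ℝ) (hγ0 : 0 < γ 0) (hα : ∀ k, 0 < α k ∧ α k < 1)
    (hstep : ∀ k, L * (α k) ^ 2 = (1 - α k) * γ k + μ * α k)
    (x y v G : ℕ → V)
    (hγrec : ∀ k, γ (k + 1) = (1 - α k) * γ k + μ * α k)
    (hyrec : ∀ k, (γ k + μ * α k) • y k = (α k * γ k) • v k + γ (k + 1) • x k)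
    (hG : ∀ k, ∀ z : V, g z ≥ g (y k - (1 / L) • G k) +
      ⟪G k - f' (y k), z - (y k - (1 / L) • G k)⟫)
    (hxrec : ∀ k, x (k + 1) = y k - (1 / L) • G k)
    (hvrec : ∀ k, γ (k + 1) • v (k + 1) =
      ((1 - α k) * γ k) • v k + α k • (μ • y k - G k)) :
    ∀ k : ℕ,
      (f (x (k + 1)) + g (x (k + 1))) - (f xstar + g xstar) +
          γ (k + 1) / 2 * ‖v (k + 1) - xstar‖ ^ 2 ≤
        (1 - α k) * ((f (x k) + g (x k)) - (f xstar + g xstar) +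
          γ k / 2 * ‖v k - xstar‖ ^ 2) :=
  stmt15_general μ L hμ hL f f' hdiff hconv hlip g xstar γ α hγ0 hα hstep x y v G hγrec hyrec hG
    hxrec hvrec
end

section
/- Let a, b, c, d ≥ 0 be real numbers and let R be the 2×2 real matrix [[−a, c], [−b, −d]], and assume tr(R) < 0 < det(R) (note tr(R) = −(a + d) and det(R) = ad + bc). Set M = [[−a, 0], [−b, −d]], N = [[0, c], [0, 0]], and for α > 0 let E(α, R) = (I − αM)⁻¹(I + αN). If α > 0 satisfies |tr(R)| − 2√(det R) ≤ bc·α ≤ |tr(R)| + 2√(det R), then the spectral radius satisfies ρ(E(α, R)) = 1/√(1 + |tr(R)|·α + a·d·α²). -/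
/-
The amplification matrix `E = (I - αM)⁻¹(I + αN)` has determinant `1 / ((1 + aα)(1 + dα))`, and
multiplying the hypothesis on `bcα`, squared, by `α²` makes its discriminant `tr(E)² - 4 det E`
nonpositive.
A real 2×2 matrix with nonpositive discriminant has a pair of complex conjugate (or a double real)
eigenvalues, both of modulus `√(det E)`.
-/

open Matrix

/-- Spectral radius of a real square matrix: maximum modulus of its complex eigenvalues. -/
noncomputable def specRad {n : Type*} [Fintype n] [DecidableEq n] (M : Matrix n n ℝ) : ℝ :=
  sSup {r : ℝ | ∃ z ∈ spectrum ℂ (M.map Complex.ofReal), r = ‖z‖}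

theorem Complex.normSq_eq_of_sq_sub_mul_add_eq_zero {t δ : ℝ} (hdisc : t ^ 2 ≤ 4 * δ) {z : ℂ}
    (hz : z ^ 2 - t * z + δ = 0) : Complex.normSq z = δ := by
  have hre := congrArg Complex.re hz
  have him := congrArg Complex.im hz
  simp only [pow_two, Complex.sub_re, Complex.add_re, Complex.mul_re, Complex.ofReal_re,
    Complex.ofReal_im, Complex.sub_im, Complex.add_im, Complex.mul_im, Complex.zero_re,
    Complex.zero_im] at hre him
  rw [Complex.normSq_apply]
  rcases eq_or_ne z.im 0 with hreal | hreal
  · -- a real root forces the discriminant to vanish, so `z = t / 2`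
    rw [hreal] at hre ⊢
    nlinarith [sq_nonneg (2 * z.re - t)]
  · have hre_eq : 2 * z.re = t := by
      have : z.im * (2 * z.re - t) = 0 := by linear_combination him
      linarith [(mul_eq_zero.mp this).resolve_left hreal]
    linear_combination (-1) * hre + z.re * hre_eq

theorem Matrix.mem_spectrum_map_ofReal_iff_fin_two (A : Matrix (Fin 2) (Fin 2) ℝ) (z : ℂ) :
    z ∈ spectrum ℂ (A.map Complex.ofReal) ↔ z ^ 2 - A.trace * z + A.det = 0 := by
  rw [Matrix.mem_spectrum_iff_isRoot_charpoly, charpoly_fin_two]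
  simp [Matrix.trace_fin_two, Matrix.det_fin_two]

theorem Matrix.specRad_eq_sqrt_det_of_sq_trace_le {A : Matrix (Fin 2) (Fin 2) ℝ}
    (hdisc : A.trace ^ 2 ≤ 4 * A.det) : specRad A = √A.det := by
  have hnorm : ∀ z ∈ spectrum ℂ (A.map Complex.ofReal), ‖z‖ = √A.det := fun z hz => by
    rw [Complex.norm_def, Complex.normSq_eq_of_sq_sub_mul_add_eq_zero hdisc
      ((A.mem_spectrum_map_ofReal_iff_fin_two z).mp hz)]
  obtain ⟨z, hz⟩ : (spectrum ℂ (A.map Complex.ofReal)).Nonempty :=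
    spectrum.nonempty_of_isAlgClosed_of_finiteDimensional ℂ _
  have hset : {r : ℝ | ∃ z ∈ spectrum ℂ (A.map Complex.ofReal), r = ‖z‖} = {√A.det} := by
    ext r
    constructor
    · rintro ⟨w, hw, rfl⟩
      exact hnorm w hw
    · rintro rfl
      exact ⟨z, hz, (hnorm z hz).symm⟩
  rw [specRad, hset, csSup_singleton]

theorem Matrix.one_add_smul_of_fin_two {R : Type*} [CommRing R] (t p q r s : R) :
    1 + t • !![p, q; r, s] = !![1 + t * p, t * q; t * r, 1 + t * s] := by
  rw [one_fin_two, smul_of, of_add_of]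
  simp

theorem Matrix.one_sub_smul_of_fin_two {R : Type*} [CommRing R] (t p q r s : R) :
    1 - t • !![p, q; r, s] = !![1 - t * p, -(t * q); -(t * r), 1 - t * s] := by
  rw [one_fin_two, smul_of, of_sub_of]
  simp

/-- `E(α, R)` for the splitting `R = M + N` of `R = !![-a, c; -b, -d]`. -/
noncomputable def amplificationMatrix (a b c d α : ℝ) : Matrix (Fin 2) (Fin 2) ℝ :=
  (1 - α • !![-a, 0; -b, -d])⁻¹ * (1 + α • !![0, c; 0, 0])

section amplificationMatrix

variable (a b c d α : ℝ)

theorem det_amplificationMatrix :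
    (amplificationMatrix a b c d α).det = ((1 + a * α) * (1 + d * α))⁻¹ := by
  rw [amplificationMatrix, det_mul, det_nonsing_inv, one_sub_smul_of_fin_two,
    one_add_smul_of_fin_two, det_fin_two_of, det_fin_two_of, Ring.inverse_eq_inv']
  ring

theorem trace_amplificationMatrix :
    (amplificationMatrix a b c d α).trace =
      (2 + (a + d) * α - b * c * α ^ 2) / ((1 + a * α) * (1 + d * α)) := by
  rw [amplificationMatrix, inv_def, one_sub_smul_of_fin_two, one_add_smul_of_fin_two,
    adjugate_fin_two_of, det_fin_two_of, Ring.inverse_eq_inv', smul_mul, trace_smul, mul_fin_two,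
    trace_fin_two_of, smul_eq_mul]
  ring

variable {a b c d α}

theorem sq_trace_amplificationMatrix_le (ha : 0 ≤ a) (hd : 0 ≤ d) (hα : 0 ≤ α)
    (h : (b * c * α - (a + d)) ^ 2 ≤ 4 * (a * d + b * c)) :
    (amplificationMatrix a b c d α).trace ^ 2 ≤ 4 * (amplificationMatrix a b c d α).det := by
  have hD : 0 < (1 + a * α) * (1 + d * α) := by positivity
  calc (amplificationMatrix a b c d α).trace ^ 2
      = (2 + (a + d) * α - b * c * α ^ 2) ^ 2 / ((1 + a * α) * (1 + d * α)) ^ 2 := by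
        rw [trace_amplificationMatrix, div_pow]
    _ ≤ 4 * ((1 + a * α) * (1 + d * α)) / ((1 + a * α) * (1 + d * α)) ^ 2 := by
        gcongr
        linear_combination α ^ 2 * h
    _ = 4 * (amplificationMatrix a b c d α).det := by
        rw [det_amplificationMatrix]
        field_simp

end amplificationMatrix

theorem stmt17_general (a b c d α : ℝ) (ha : 0 ≤ a) (hd : 0 ≤ d)
    (R M N : Matrix (Fin 2) (Fin 2) ℝ)
    (hR : R = !![-a, c; -b, -d]) (hM : M = !![-a, 0; -b, -d]) (hN : N = !![0, c; 0, 0])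
    (hdet : 0 < R.det)
    (hα : 0 < α)
    (h1 : |R.trace| - 2 * Real.sqrt R.det ≤ b * c * α)
    (h2 : b * c * α ≤ |R.trace| + 2 * Real.sqrt R.det) :
    specRad ((1 - α • M)⁻¹ * (1 + α • N)) =
      1 / Real.sqrt (1 + |R.trace| * α + a * d * α ^ 2) := by
  have htrace : |R.trace| = a + d := by
    rw [hR, trace_fin_two_of, ← neg_add, abs_neg, abs_of_nonneg (add_nonneg ha hd)]
  have hRdet : R.det = a * d + b * c := by
    rw [hR, det_fin_two_of]
    ring
  have hdisc : (b * c * α - (a + d)) ^ 2 ≤ 4 * (a * d + b * c) := by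
    have h : (b * c * α - |R.trace|) ^ 2 ≤ (2 * √R.det) ^ 2 :=
      sq_le_sq' (by linarith) (by linarith)
    rwa [mul_pow, Real.sq_sqrt hdet.le, htrace, hRdet, show (2:ℝ) ^ 2 = 4 by norm_num] at h
  subst hM hN
  change specRad (amplificationMatrix a b c d α) = _
  rw [(amplificationMatrix a b c d α).specRad_eq_sqrt_det_of_sq_trace_le
      (sq_trace_amplificationMatrix_le ha hd hα.le hdisc),
    det_amplificationMatrix, Real.sqrt_inv, one_div, htrace]
  congr 2
  ring

theorem stmt17 (a b c d α : ℝ) (ha : 0 ≤ a) (hb : 0 ≤ b) (hc : 0 ≤ c) (hd : 0 ≤ d)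
    (R M N : Matrix (Fin 2) (Fin 2) ℝ)
    (hR : R = !![-a, c; -b, -d]) (hM : M = !![-a, 0; -b, -d]) (hN : N = !![0, c; 0, 0])
    (htr : R.trace < 0) (hdet : 0 < R.det)
    (hα : 0 < α)
    (h1 : |R.trace| - 2 * Real.sqrt R.det ≤ b * c * α)
    (h2 : b * c * α ≤ |R.trace| + 2 * Real.sqrt R.det) :
    specRad ((1 - α • M)⁻¹ * (1 + α • N)) =
      1 / Real.sqrt (1 + |R.trace| * α + a * d * α ^ 2) :=
  stmt17_general a b c d α ha hd R M N hR hM hN hdet hα h1 h2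
end

section
/- Let 0 ≤ μ < L and γ_0 > 0. Define sequences (α_k)_{k≥0} and (γ_k)_{k≥0} by: α_k is a solution of L·α_k² = (1 − α_k)γ_k + μα_k with γ_{k+1} = (1 − α_k)γ_k + μα_k. Then for all k ≥ 0: γ_k > 0, 0 < α_k < 1, and α_k ≥ √(min{γ_1, μ}/L). Moreover, for all k ≥ 0, ∏_{i=0}^{k−1}(1 − α_i) ≤ min{ 4L/(√γ_0·k + 2√L)², (1 − √(min{γ_1, μ}/L))^{k} }. -/
/-!
Since `L α_k² = γ_{k+1}`, every `γ_{k+1}` is positive, and `α_k < 1` because `α ≥ 1` would give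
`L α² ≤ μ α < L α`. As `γ_{k+1}` is a convex combination of `γ_k` and `μ`, it stays above
`min γ_1 μ`, whence `α_k ≥ √(min γ_1 μ / L)` and the geometric bound on `λ_k = ∏_{i<k} (1 - α_i)`.
For the sublinear bound, `γ_{k+1} ≥ (1 - α_k) γ_k` gives `γ_k ≥ λ_k γ_0`, so
`α_k ≥ √(γ_0 / L) · √λ_{k+1}`; this makes `1 / √λ_k` grow by at least `½ √(γ_0 / L)` per step.
-/

open Finset Real

namespace EstimateSequence

lemma lt_one_of_sq_eq {μ L γ α : ℝ} (hμ : 0 ≤ μ) (hμL : μ < L) (hγ : 0 ≤ γ) (hα : 0 < α)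
    (h : L * α ^ 2 = (1 - α) * γ + μ * α) : α < 1 := by
  by_contra! h1
  nlinarith [mul_nonneg (sub_nonneg.mpr h1) hγ, mul_pos (sub_pos.mpr hμL) hα,
    mul_nonneg (mul_nonneg (hμ.trans hμL.le) (sub_nonneg.mpr h1)) hα.le]

lemma sqrt_div_le {L x α : ℝ} (hL : 0 < L) (hα : 0 ≤ α) (h : x ≤ L * α ^ 2) :
    √(x / L) ≤ α :=
  (sqrt_le_left hα).mpr <| (div_le_iff₀ hL).mpr (by linarith)

lemma inv_sqrt_add_le_inv_sqrt_mul_one_sub {a x c : ℝ} (ha : 0 < a) (hx : x < 1) (hc : 0 ≤ c)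
    (h : 2 * c * √(a * (1 - x)) ≤ x) : (√a)⁻¹ + c ≤ (√(a * (1 - x)))⁻¹ := by
  set s := √a
  set t := √(a * (1 - x))
  have hs : 0 < s := sqrt_pos.mpr ha
  have ht : 0 < t := sqrt_pos.mpr (mul_pos ha (by linarith))
  have hs2 : s ^ 2 = a := sq_sqrt ha.le
  have ht2 : t ^ 2 = a * (1 - x) := sq_sqrt (mul_pos ha (by linarith)).le
  have hts : t ≤ s := sqrt_le_sqrt (by nlinarith [h.trans' (by positivity : 0 ≤ 2 * c * t)])
  -- `2 c t s² ≤ x s² = s² - t² ≤ 2 s (s - t)`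
  have hstep : c * t * s ≤ s - t := by
    have := mul_le_mul_of_nonneg_right h (sq_nonneg s)
    nlinarith [mul_nonneg (sub_nonneg.mpr hts) ht.le]
  rw [inv_eq_one_div, inv_eq_one_div, div_add' _ _ _ hs.ne', div_le_div_iff₀ hs ht]
  nlinarith

lemma prod_one_sub_le_pow {α : ℕ → ℝ} {a : ℝ} (ha : ∀ i, a ≤ α i) (hα : ∀ i, α i ≤ 1) (k : ℕ) :
    ∏ i ∈ range k, (1 - α i) ≤ (1 - a) ^ k := by
  calc ∏ i ∈ range k, (1 - α i) ≤ ∏ _i ∈ range k, (1 - a) :=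
        prod_le_prod (fun i _ => sub_nonneg.mpr (hα i)) fun i _ => by linarith [ha i]
    _ = (1 - a) ^ k := by rw [prod_const, card_range]

lemma one_add_mul_le_inv_sqrt_prod {α : ℕ → ℝ} {c : ℝ} (hc : 0 ≤ c) (hα : ∀ k, α k < 1)
    (h : ∀ k, 2 * c * √(∏ i ∈ range (k + 1), (1 - α i)) ≤ α k) (k : ℕ) :
    1 + k * c ≤ (√(∏ i ∈ range k, (1 - α i)))⁻¹ := by
  induction k with
  | zero => simp
  | succ k ih =>
    have hpos : 0 < ∏ i ∈ range k, (1 - α i) := prod_pos fun i _ => sub_pos.mpr (hα i)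
    have hstep := inv_sqrt_add_le_inv_sqrt_mul_one_sub hpos (hα k) hc
      (by rw [← prod_range_succ]; exact h k)
    rw [prod_range_succ]
    push_cast
    linarith

lemma sq_one_add_mul_mul_prod_le_one {α : ℕ → ℝ} {c : ℝ} (hc : 0 ≤ c) (hα : ∀ k, α k < 1)
    (h : ∀ k, 2 * c * √(∏ i ∈ range (k + 1), (1 - α i)) ≤ α k) (k : ℕ) :
    (1 + k * c) ^ 2 * ∏ i ∈ range k, (1 - α i) ≤ 1 := by
  set P := ∏ i ∈ range k, (1 - α i)
  have hP : 0 < P := prod_pos fun i _ => sub_pos.mpr (hα i)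
  have hsq : (1 + k * c) ^ 2 ≤ P⁻¹ :=
    calc (1 + k * c) ^ 2 ≤ ((√P)⁻¹) ^ 2 :=
          pow_le_pow_left₀ (by positivity) (one_add_mul_le_inv_sqrt_prod hc hα h k) 2
      _ = P⁻¹ := by rw [inv_pow, sq_sqrt hP.le]
  calc (1 + k * c) ^ 2 * P ≤ P⁻¹ * P := mul_le_mul_of_nonneg_right hsq hP.le
    _ = 1 := inv_mul_cancel₀ hP.ne'

section Sequences

variable {μ L : ℝ} {γ α : ℕ → ℝ}

lemma gamma_pos (hL : 0 < L) (hγ0 : 0 < γ 0) (hα : ∀ k, 0 < α k)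
    (hγα : ∀ k, γ (k + 1) = L * α k ^ 2) : ∀ k, 0 < γ k
  | 0 => hγ0
  | k + 1 => by rw [hγα k]; exact mul_pos hL (pow_pos (hα k) 2)

lemma min_le_gamma_succ (hα0 : ∀ k, 0 ≤ α k) (hα1 : ∀ k, α k ≤ 1)
    (hγrec : ∀ k, γ (k + 1) = (1 - α k) * γ k + μ * α k) : ∀ k, min (γ 1) μ ≤ γ (k + 1)
  | 0 => min_le_left _ _
  | k + 1 => by
    have hcombo := Convex.min_le_combo (γ (k + 1)) μ (sub_nonneg.mpr (hα1 (k + 1))) (hα0 (k + 1))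
      (sub_add_cancel 1 _)
    rw [smul_eq_mul, smul_eq_mul, mul_comm (α _), ← hγrec] at hcombo
    exact (le_min (min_le_gamma_succ hα0 hα1 hγrec k) (min_le_right _ _)).trans hcombo

lemma prod_mul_le_gamma (hμ : 0 ≤ μ) (hα0 : ∀ k, 0 ≤ α k) (hα1 : ∀ k, α k ≤ 1)
    (hγrec : ∀ k, γ (k + 1) = (1 - α k) * γ k + μ * α k) :
    ∀ k, (∏ i ∈ range k, (1 - α i)) * γ 0 ≤ γ k
  | 0 => by simp
  | k + 1 => by
    have ih := prod_mul_le_gamma hμ hα0 hα1 hγrec k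
    rw [prod_range_succ, hγrec]
    nlinarith [mul_le_mul_of_nonneg_left ih (sub_nonneg.mpr (hα1 k)), mul_nonneg hμ (hα0 k)]

lemma prod_one_sub_le_four_mul_div_sq (hμ : 0 ≤ μ) (hL : 0 < L) (hα0 : ∀ k, 0 ≤ α k)
    (hα1 : ∀ k, α k < 1) (hγrec : ∀ k, γ (k + 1) = (1 - α k) * γ k + μ * α k)
    (hγα : ∀ k, γ (k + 1) = L * α k ^ 2) (k : ℕ) :
    ∏ i ∈ range k, (1 - α i) ≤ 4 * L / (√(γ 0) * k + 2 * √L) ^ 2 := by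
  set c := √(γ 0) / (2 * √L) with hc
  have h2c : 2 * √L * c = √(γ 0) := by rw [hc]; field_simp
  have hrate : ∀ k, 2 * c * √(∏ i ∈ range (k + 1), (1 - α i)) ≤ α k := fun k => by
    have hP : 0 ≤ ∏ i ∈ range (k + 1), (1 - α i) :=
      prod_nonneg fun i _ => sub_nonneg.mpr (hα1 i).le
    have hsqrt : 2 * c * √(∏ i ∈ range (k + 1), (1 - α i))
        = √((∏ i ∈ range (k + 1), (1 - α i)) * γ 0 / L) := by
      rw [sqrt_div' _ hL.le, sqrt_mul hP, ← h2c]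
      field_simp
    rw [hsqrt]
    exact sqrt_div_le hL (hα0 k)
      (hγα k ▸ prod_mul_le_gamma hμ hα0 (fun k => (hα1 k).le) hγrec (k + 1))
  have hbound := sq_one_add_mul_mul_prod_le_one (by positivity) hα1 hrate k
  have hden : (√(γ 0) * k + 2 * √L) ^ 2 = 4 * L * (1 + k * c) ^ 2 := by
    rw [← h2c]
    linear_combination 4 * (1 + k * c) ^ 2 * sq_sqrt hL.le
  rw [le_div_iff₀ (by positivity), hden]
  nlinarith

end Sequences

end EstimateSequence

open EstimateSequence in
theorem stmt18 (μ L : ℝ) (hμ : 0 ≤ μ) (hμL : μ < L)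
    (γ α : ℕ → ℝ) (hγ0 : 0 < γ 0)
    (hαpos : ∀ k, 0 < α k)
    (hquad : ∀ k, L * (α k) ^ 2 = (1 - α k) * γ k + μ * α k)
    (hγrec : ∀ k, γ (k + 1) = (1 - α k) * γ k + μ * α k) :
    (∀ k : ℕ, 0 < γ k ∧ 0 < α k ∧ α k < 1 ∧ Real.sqrt (min (γ 1) μ / L) ≤ α k) ∧
    (∀ k : ℕ, (∏ i ∈ Finset.range k, (1 - α i)) ≤
      min (4 * L / (Real.sqrt (γ 0) * k + 2 * Real.sqrt L) ^ 2)
        ((1 - Real.sqrt (min (γ 1) μ / L)) ^ k)) := by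
  have hL : 0 < L := hμ.trans_lt hμL
  have hγα : ∀ k, γ (k + 1) = L * α k ^ 2 := fun k => (hγrec k).trans (hquad k).symm
  have hγpos := gamma_pos hL hγ0 hαpos hγα
  have hα1 : ∀ k, α k < 1 := fun k => lt_one_of_sq_eq hμ hμL (hγpos k).le (hαpos k) (hquad k)
  have hα0 : ∀ k, 0 ≤ α k := fun k => (hαpos k).le
  have hmin : ∀ k, √(min (γ 1) μ / L) ≤ α k := fun k =>
    sqrt_div_le hL (hα0 k) (hγα k ▸ min_le_gamma_succ hα0 (fun k => (hα1 k).le) hγrec k)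
  exact ⟨fun k => ⟨hγpos k, hαpos k, hα1 k, hmin k⟩, fun k =>
    le_min (prod_one_sub_le_four_mul_div_sq hμ hL hα0 hα1 hγrec hγα k)
      (prod_one_sub_le_pow hmin (fun k => (hα1 k).le) k)⟩
end

section
/- Let μ ≥ 0, L > 0 with μ ≤ L, and γ_0 > 0. Define sequences (α_k)_{k≥0} and (γ_k)_{k≥0} by: α_k is the positive root of L·α_k² = γ_k(1 + α_k), and γ_{k+1} = γ_k + α_k(μ − γ_{k+1}), i.e. γ_{k+1} = (γ_k + μα_k)/(1 + α_k). Then for all k ≥ 0: γ_k > 0, α_k > 0, and α_k ≥ √(min{γ_0, μ}/L). Moreover, for all k ≥ 0, ∏_{i=0}^{k−1} 1/(1 + α_i) ≤ min{ 4L/(√γ_0·k + 2√L)², (1 + √(min{γ_0, μ}/L))^{−k} }. -/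
/-!
Since `γ_{k+1}` is a convex combination of `γ_k` and `μ`, it stays above `min γ_0 μ`, and
`L α_k² = γ_k (1 + α_k) ≥ γ_k` gives the linear-rate bound on `α_k`. Moreover
`γ_{k+1} (1 + α_k) ≥ γ_k`, so `γ_0 ≤ γ_k Q_k` with `Q_k = ∏_{i<k} (1 + α_i)`. Writing
`t = √(1 + α_k)`, the quadratic equation reads `√(γ_k / L) = (t² - 1) / t ≤ 2 (t - 1)`, hence
`√Q_{k+1} - √Q_k = √Q_k (t - 1) ≥ √(γ_0 / γ_k) · √(γ_k / L) / 2 = √(γ_0 / L) / 2`,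
which gives the sublinear rate `Q_k ≥ (1 + k √(γ_0 / L) / 2)²`.
-/

open Finset Real

section Step

variable {L γ α : ℝ}

lemma div_le_sq_of_mul_sq_eq (hL : 0 < L) (hγ : 0 ≤ γ) (hα : 0 ≤ α)
    (h : L * α ^ 2 = γ * (1 + α)) : γ / L ≤ α ^ 2 := by
  rw [div_le_iff₀ hL]
  nlinarith [mul_nonneg hγ hα]

lemma sqrt_div_le_two_mul_sqrt_one_add_sub_one (hL : 0 < L) (hα : 0 ≤ α)
    (h : L * α ^ 2 = γ * (1 + α)) : √(γ / L) ≤ 2 * (√(1 + α) - 1) := by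
  set t := √(1 + α) with ht
  have ht_sq : t ^ 2 = 1 + α := sq_sqrt (by linarith)
  have ht_one : 1 ≤ t := by rw [ht]; exact one_le_sqrt.mpr (by linarith)
  have hγ : γ / L = (t ^ 2 - 1) ^ 2 / t ^ 2 := by
    rw [div_eq_div_iff hL.ne' (by positivity), ht_sq]
    linear_combination -h
  rw [sqrt_le_left (by linarith), hγ, div_le_iff₀ (by positivity)]
  nlinarith [mul_nonneg (pow_nonneg (sub_nonneg.mpr ht_one) 3) (by linarith : (0 : ℝ) ≤ 3 * t + 1)]

end Step

lemma le_add_mul_div_one_add {m γ μ α : ℝ} (hγ : m ≤ γ) (hμ : m ≤ μ) (hα : 0 ≤ α) :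
    m ≤ (γ + μ * α) / (1 + α) := by
  rw [le_div_iff₀ (by linarith)]
  nlinarith

lemma pow_le_prod_one_add {s : ℝ} {α : ℕ → ℝ} (hs : 0 ≤ s) (hα : ∀ i, s ≤ α i) (k : ℕ) :
    (1 + s) ^ k ≤ ∏ i ∈ range k, (1 + α i) := by
  have h := prod_le_prod (s := range k) (f := fun _ => 1 + s) (g := fun i => 1 + α i)
    (fun i _ => by linarith) fun i _ => by linarith [hα i]
  rwa [prod_const, card_range] at h

lemma four_mul_div_sq_eq_inv_sq {a L : ℝ} (ha : 0 ≤ a) (hL : 0 < L) (x : ℝ) :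
    4 * L / (√a * x + 2 * √L) ^ 2 = ((1 + x * √(a / L) / 2) ^ 2)⁻¹ := by
  rw [sqrt_div ha, ← inv_div, show 1 + x * (√a / √L) / 2 = (√a * x + 2 * √L) / (2 * √L) by
    field_simp; ring, div_pow, mul_pow, sq_sqrt hL.le]
  norm_num

section Sequence

variable {μ L : ℝ} {γ α : ℕ → ℝ} (hαpos : ∀ k, 0 < α k)
  (hγrec : ∀ k, γ (k + 1) = (γ k + μ * α k) / (1 + α k))
include hαpos hγrec

lemma min_le_of_rec (k : ℕ) : min (γ 0) μ ≤ γ k := by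
  induction k with
  | zero => exact min_le_left _ _
  | succ n ih => exact hγrec n ▸ le_add_mul_div_one_add ih (min_le_right _ _) (hαpos n).le

lemma le_mul_prod_of_rec (hμ : 0 ≤ μ) (k : ℕ) :
    γ 0 ≤ γ k * ∏ i ∈ range k, (1 + α i) := by
  induction k with
  | zero => simp
  | succ n ih =>
    have hstep : γ n ≤ γ (n + 1) * (1 + α n) := by
      rw [hγrec n, div_mul_cancel₀ _ (by linarith [hαpos n])]
      nlinarith [hαpos n]
    rw [prod_range_succ, mul_comm (∏ i ∈ range n, _), ← mul_assoc]
    exact ih.trans (mul_le_mul_of_nonneg_right hstep (prod_nonneg fun i _ => by linarith [hαpos i]))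

lemma pos_of_rec (hμ : 0 ≤ μ) (hγ0 : 0 < γ 0) (k : ℕ) : 0 < γ k :=
  pos_of_mul_pos_left (hγ0.trans_le (le_mul_prod_of_rec hαpos hγrec hμ k))
    (prod_nonneg fun i _ => by linarith [hαpos i])

variable (hμ : 0 ≤ μ) (hL : 0 < L) (hγ0 : 0 < γ 0)
  (hquad : ∀ k, L * α k ^ 2 = γ k * (1 + α k))
include hμ hL hγ0 hquad

lemma sqrt_min_div_le_of_rec (k : ℕ) : √(min (γ 0) μ / L) ≤ α k := by
  rw [sqrt_le_left (hαpos k).le]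
  calc min (γ 0) μ / L ≤ γ k / L := div_le_div_of_nonneg_right (min_le_of_rec hαpos hγrec k) hL.le
    _ ≤ α k ^ 2 :=
      div_le_sq_of_mul_sq_eq hL (pos_of_rec hαpos hγrec hμ hγ0 k).le (hαpos k).le (hquad k)

lemma one_add_mul_le_sqrt_prod_of_rec (k : ℕ) :
    1 + k * √(γ 0 / L) / 2 ≤ √(∏ i ∈ range k, (1 + α i)) := by
  induction k with
  | zero => simp
  | succ n ih =>
    have hγn := pos_of_rec hαpos hγrec hμ hγ0 n
    have hQ : √(γ 0 / γ n) ≤ √(∏ i ∈ range n, (1 + α i)) := by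
      refine sqrt_le_sqrt ((div_le_iff₀ hγn).mpr ?_)
      linarith [le_mul_prod_of_rec hαpos hγrec hμ n]
    have hsplit : √(γ 0 / L) = √(γ 0 / γ n) * √(γ n / L) := by
      rw [← sqrt_mul (div_nonneg hγ0.le hγn.le), div_mul_div_cancel₀ hγn.ne']
    have hincr : √(γ 0 / L) ≤ √(∏ i ∈ range n, (1 + α i)) * (2 * (√(1 + α n) - 1)) := by
      rw [hsplit]
      exact mul_le_mul hQ (sqrt_div_le_two_mul_sqrt_one_add_sub_one hL (hαpos n).le (hquad n))
        (sqrt_nonneg _) (sqrt_nonneg _)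
    rw [prod_range_succ, sqrt_mul (prod_nonneg fun i _ => by linarith [hαpos i])]
    push_cast
    nlinarith

end Sequence

theorem stmt19_general (μ L : ℝ) (hμ : 0 ≤ μ) (hL : 0 < L)
    (γ α : ℕ → ℝ) (hγ0 : 0 < γ 0)
    (hαpos : ∀ k, 0 < α k)
    (hquad : ∀ k, L * (α k) ^ 2 = γ k * (1 + α k))
    (hγrec : ∀ k, γ (k + 1) = (γ k + μ * α k) / (1 + α k)) :
    (∀ k : ℕ, 0 < γ k ∧ 0 < α k ∧ Real.sqrt (min (γ 0) μ / L) ≤ α k) ∧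
    (∀ k : ℕ, (∏ i ∈ Finset.range k, (1 + α i)⁻¹) ≤
      min (4 * L / (Real.sqrt (γ 0) * k + 2 * Real.sqrt L) ^ 2)
        (((1 + Real.sqrt (min (γ 0) μ / L)) ^ k)⁻¹)) := by
  have hαlb := sqrt_min_div_le_of_rec hαpos hγrec hμ hL hγ0 hquad
  refine ⟨fun k => ⟨pos_of_rec hαpos hγrec hμ hγ0 k, hαpos k, hαlb k⟩, fun k => ?_⟩
  have hQ : 0 < ∏ i ∈ range k, (1 + α i) := prod_pos fun i _ => by linarith [hαpos i]
  rw [prod_inv_distrib]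
  refine le_min ?_ (inv_anti₀ (by positivity) (pow_le_prod_one_add (sqrt_nonneg _) hαlb k))
  rw [four_mul_div_sq_eq_inv_sq hγ0.le hL]
  refine inv_anti₀ (by positivity) ((le_sqrt' (by positivity)).mp ?_)
  exact one_add_mul_le_sqrt_prod_of_rec hαpos hγrec hμ hL hγ0 hquad k

theorem stmt19 (μ L : ℝ) (hμ : 0 ≤ μ) (hμL : μ ≤ L) (hL : 0 < L)
    (γ α : ℕ → ℝ) (hγ0 : 0 < γ 0)
    (hαpos : ∀ k, 0 < α k)
    (hquad : ∀ k, L * (α k) ^ 2 = γ k * (1 + α k))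
    (hγrec : ∀ k, γ (k + 1) = (γ k + μ * α k) / (1 + α k)) :
    (∀ k : ℕ, 0 < γ k ∧ 0 < α k ∧ Real.sqrt (min (γ 0) μ / L) ≤ α k) ∧
    (∀ k : ℕ, (∏ i ∈ Finset.range k, (1 + α i)⁻¹) ≤
      min (4 * L / (Real.sqrt (γ 0) * k + 2 * Real.sqrt L) ^ 2)
        (((1 + Real.sqrt (min (γ 0) μ / L)) ^ k)⁻¹)) :=
  stmt19_general μ L hμ hL γ α hγ0 hαpos hquad hγrec
end
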